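/- arXiv:1109.5510 — 2 statements merged into one kernel-verified Lean document; each statement's English description precedes it below -/
import Mathlib

section
/- Let f : ℝ^N → ℝ be bounded, continuous and nonnegative, let u be the BC-solution of the nonlocal Stefan problem with initial datum f, and let v = (u − 1)₊. Then for all x ∈ ℝ^N and all 0 ≤ s ≤ t, u(x,t) ≥ e^{−(t−s)} u(x,s) and v(x,t) ≥ e^{−(t−s)} v(x,s). In particular the sets {u(·,t) > 0} and {v(·,t) > 0} are nondecreasing in t. -/
/-!
For fixed `x`, `t ↦ u(x,t)` has right derivative `J ∗ v − v ≥ −v` on `[0, ∞)`, since `J` and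
`v = (u − 1)₊` are nonnegative. For a level `a ≤ 1` we have `v ≤ (u − a)₊`, so the excess
`k = u − a` satisfies `k' ≥ −k₊`; a comparison with the barrier `e^{−(t−s)} k(s)` then shows that
`k(t) ≥ e^{−(t−s)} k(s)` whenever `k(s) ≥ 0`. The level `a = 0`, started from `u(·,0) = f ≥ 0`,
gives the bound for `u` (and `u ≥ 0`); the level `a = 1` gives the bound for `v`.
-/

open MeasureTheory Filter
open scoped Topology Pointwise

noncomputable section

abbrev Spc (N : ℕ) := EuclideanSpace ℝ (Fin N)

variable {N : ℕ}

/-- Convolution in the space variable: `(J ∗ v)(x) = ∫ J(x−y) v(y) dy`. -/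
def convol (J v : Spc N → ℝ) : Spc N → ℝ := fun x => ∫ y, J (x - y) * v y

/-- The temperature associated to an enthalpy `g`: `(g − 1)₊`. -/
def tempr (g : Spc N → ℝ) : Spc N → ℝ := fun x => max (g x - 1) 0

/-- Hypotheses on the kernel `J`: continuous, nonnegative, radially symmetric,
supported in the closed ball of radius `RJ > 0`, with unit mass. -/
structure IsKernel (J : Spc N → ℝ) (RJ : ℝ) : Prop where
  cont : Continuous J
  nonneg : ∀ x, 0 ≤ J x
  radial : ∀ x y : Spc N, ‖x‖ = ‖y‖ → J x = J y
  supp_subset : ∀ x : Spc N, RJ < ‖x‖ → J x = 0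
  radius_pos : 0 < RJ
  mass : ∫ x, J x = 1

/-- `u` is an L¹-solution of the nonlocal Stefan problem with initial datum `f`:
a continuous curve in L¹ such that `u(t) = f + ∫₀ᵗ (J∗v(s) − v(s)) ds` with `v = (u−1)₊`. -/
structure IsL1Solution (J f : Spc N → ℝ) (u : ℝ → Spc N → ℝ) : Prop where
  integrable : ∀ t, 0 ≤ t → Integrable (u t)
  contL1 : ∀ t, 0 ≤ t →
    Tendsto (fun s => ∫ x, |u s x - u t x|) (𝓝[Set.Ici (0:ℝ)] t) (𝓝 0)
  eqn : ∀ t, 0 ≤ t → ∀ᵐ x ∂(volume : Measure (Spc N)), u t x =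
    f x + ∫ s in (0:ℝ)..t, (convol J (tempr (u s)) x - tempr (u s) x)

/-- `u` is a BC-solution of the nonlocal Stefan problem with (bounded continuous) initial
datum `f`: continuous and bounded on `ℝ^N × [0,T]` for every `T > 0`, and satisfying the
integral equation pointwise, with `v = (u − 1)₊`, the convolution in the space variable. -/
structure IsBCSolution (J f : Spc N → ℝ) (u : Spc N → ℝ → ℝ) : Prop where
  cont : ContinuousOn (fun p : Spc N × ℝ => u p.1 p.2) {p : Spc N × ℝ | 0 ≤ p.2}
  bdd : ∀ T, 0 < T → ∃ C, ∀ x : Spc N, ∀ t ∈ Set.Icc (0:ℝ) T, |u x t| ≤ C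
  eqn : ∀ x : Spc N, ∀ t, 0 ≤ t → u x t =
    f x + ∫ s in (0:ℝ)..t,
      ((∫ y, J (x - y) * max (u y s - 1) 0) - max (u x s - 1) 0)

open Set

/-- A strict-fencing argument: `k` stays above the barrier `e^{-(r-s)} k(s) - ε (r - s + 1)`,
since at a contact point the bound `k' ≥ -k₊` beats the barrier's slope by `ε`. -/
theorem exp_neg_mul_le_of_deriv_right_ge_neg_max {k k' : ℝ → ℝ} {s t : ℝ} (hst : s ≤ t)
    (hk : ContinuousOn k (Icc s t))
    (hk' : ∀ r ∈ Ico s t, HasDerivWithinAt k (k' r) (Ici r) r)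
    (hbound : ∀ r ∈ Ico s t, -max (k r) 0 ≤ k' r) (hs : 0 ≤ k s) :
    Real.exp (-(t - s)) * k s ≤ k t := by
  have barrier : ∀ ε > 0, Real.exp (-(t - s)) * k s - ε * (t - s + 1) ≤ k t := by
    intro ε hε
    have hB : ∀ r, HasDerivAt (fun r => -(Real.exp (-(r - s)) * k s - ε * (r - s + 1)))
        (Real.exp (-(r - s)) * k s + ε) r := by
      intro r
      have hexp : HasDerivAt (fun r => Real.exp (-(r - s))) (-Real.exp (-(r - s))) r := by
        simpa using ((hasDerivAt_id r).sub_const s).neg.exp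
      exact ((hexp.mul_const (k s)).sub
        ((((hasDerivAt_id r).sub_const s).add_const 1).const_mul ε)).neg.congr_deriv (by ring)
    have hfence := image_le_of_deriv_right_lt_deriv_boundary (f := fun r => -k r)
      hk.neg (fun r hr => (hk' r hr).neg) (by simp [hε.le]) hB ?_ (right_mem_Icc.2 hst)
    · exact neg_le_neg_iff.1 hfence
    intro r hr hcontact
    have hbarrier_nonneg : 0 ≤ Real.exp (-(r - s)) * k s := by positivity
    have hrs : 0 ≤ r - s := sub_nonneg.2 hr.1
    have := hbound r hr
    rcases le_total (k r) 0 with hneg | hpos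
    · rw [max_eq_right hneg] at this
      linarith
    · rw [max_eq_left hpos] at this
      nlinarith
  refine le_of_forall_pos_le_add fun δ hδ => ?_
  have hlen : 0 < t - s + 1 := by linarith
  have := barrier (δ / (t - s + 1)) (by positivity)
  rw [div_mul_cancel₀ δ hlen.ne'] at this
  linarith

theorem IsKernel.integrable {J : Spc N → ℝ} {RJ : ℝ} (hJ : IsKernel J RJ) : Integrable J :=
  hJ.cont.integrable_of_hasCompactSupport <|
    HasCompactSupport.intro (isCompact_closedBall 0 RJ) fun x hx =>
      hJ.supp_subset x (by simpa using hx)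

theorem convol_nonneg {J v : Spc N → ℝ} (hJ : ∀ x, 0 ≤ J x) (hv : ∀ x, 0 ≤ v x) (x : Spc N) :
    0 ≤ convol J v x :=
  integral_nonneg fun y => mul_nonneg (hJ _) (hv y)

theorem tempr_nonneg (g : Spc N → ℝ) (x : Spc N) : 0 ≤ tempr g x :=
  le_max_right _ _

def stefanRhs (J : Spc N → ℝ) (u : Spc N → ℝ → ℝ) (x : Spc N) (s : ℝ) : ℝ :=
  convol J (tempr (u · s)) x - tempr (u · s) x

namespace IsBCSolution

variable {J f : Spc N → ℝ} {u : Spc N → ℝ → ℝ}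

theorem continuous_space (hu : IsBCSolution J f u) {t : ℝ} (ht : 0 ≤ t) :
    Continuous (u · t) :=
  continuousOn_univ.1 <|
    hu.cont.comp (continuous_id.prodMk continuous_const).continuousOn fun _ _ => ht

theorem continuousOn_time (hu : IsBCSolution J f u) (x : Spc N) :
    ContinuousOn (u x) (Ici 0) :=
  hu.cont.comp (continuous_const.prodMk continuous_id).continuousOn fun _ ht => ht

theorem continuousOn_convol_tempr {RJ : ℝ} (hJ : IsKernel J RJ) (hu : IsBCSolution J f u)
    (x : Spc N) {T : ℝ} (hT : 0 < T) :
    ContinuousOn (fun s => convol J (tempr (u · s)) x) (Icc 0 T) := by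
  obtain ⟨C, hC⟩ := hu.bdd T hT
  refine continuousOn_of_dominated (bound := fun y => J (x - y) * C) ?_ ?_
    (hJ.integrable.comp_sub_left x |>.mul_const C) ?_
  · intro s hs
    exact ((hJ.cont.comp (continuous_const.sub continuous_id)).mul
      (((hu.continuous_space hs.1).sub continuous_const).max continuous_const)).aestronglyMeasurable
  · intro s hs
    refine .of_forall fun y => ?_
    have hCy := hC y s hs
    rw [Real.norm_eq_abs, abs_of_nonneg (mul_nonneg (hJ.nonneg _) (tempr_nonneg _ _))]
    refine mul_le_mul_of_nonneg_left (max_le ?_ (abs_nonneg _ |>.trans hCy)) (hJ.nonneg _)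
    linarith [le_abs_self (u y s)]
  · refine .of_forall fun y => ?_
    exact continuousOn_const.mul ((((hu.continuousOn_time y).mono Icc_subset_Ici_self).sub
      continuousOn_const).sup continuousOn_const)

theorem continuousOn_stefanRhs {RJ : ℝ} (hJ : IsKernel J RJ) (hu : IsBCSolution J f u)
    (x : Spc N) {T : ℝ} (hT : 0 < T) :
    ContinuousOn (stefanRhs J u x) (Icc 0 T) :=
  (hu.continuousOn_convol_tempr hJ x hT).sub
    ((((hu.continuousOn_time x).mono Icc_subset_Ici_self).sub continuousOn_const).sup
      continuousOn_const)

theorem hasDerivWithinAt {RJ : ℝ} (hJ : IsKernel J RJ) (hu : IsBCSolution J f u)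
    (x : Spc N) {t : ℝ} (ht : 0 ≤ t) :
    HasDerivWithinAt (u x) (stefanRhs J u x t) (Ici t) t := by
  have hcont := hu.continuousOn_stefanRhs hJ x (T := t + 1) (by linarith)
  have hnhds : Icc 0 (t + 1) ∈ 𝓝[>] t :=
    mem_of_superset (Icc_mem_nhdsGT (by linarith)) (Icc_subset_Icc_left ht)
  have hFTC := intervalIntegral.integral_hasDerivWithinAt_right (s := Ici t) (t := Ioi t)
    ((hcont.mono (Icc_subset_Icc_right (by linarith))).intervalIntegrable_of_Icc ht)
    ⟨_, hnhds, hcont.aestronglyMeasurable measurableSet_Icc⟩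
    (hcont.continuousWithinAt ⟨ht, by linarith⟩ |>.mono_of_mem_nhdsWithin hnhds)
  exact (hFTC.const_add (f x)).congr (fun r hr => hu.eqn x r (ht.trans hr)) (hu.eqn x t ht)

theorem exp_neg_mul_sub_le {RJ : ℝ} (hJ : IsKernel J RJ) (hu : IsBCSolution J f u)
    {a : ℝ} (ha : a ≤ 1) (x : Spc N) {s t : ℝ} (hs : 0 ≤ s) (hst : s ≤ t) (has : a ≤ u x s) :
    Real.exp (-(t - s)) * (u x s - a) ≤ u x t - a := by
  refine exp_neg_mul_le_of_deriv_right_ge_neg_max (k := fun r => u x r - a) hst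
    (((hu.continuousOn_time x).mono fun r hr => hs.trans hr.1).sub continuousOn_const)
    (fun r hr => (hu.hasDerivWithinAt hJ x (hs.trans hr.1)).sub_const a) (fun r _ => ?_)
    (sub_nonneg.2 has)
  have hrhs : -tempr (u · r) x ≤ stefanRhs J u x r := by
    have := convol_nonneg hJ.nonneg (tempr_nonneg (u · r)) x
    unfold stefanRhs
    linarith
  have htempr : tempr (u · r) x ≤ max (u x r - a) 0 :=
    max_le_max_right 0 (by linarith)
  linarith

end IsBCSolution

theorem stefan_nonlocal_BC_retention_general
    (N : ℕ) (J : Spc N → ℝ) (RJ : ℝ) (hJ : IsKernel J RJ)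
    (f : Spc N → ℝ)
    (hf0 : ∀ x, 0 ≤ f x)
    (u : Spc N → ℝ → ℝ) (hu : IsBCSolution J f u) :
    (∀ x : Spc N, ∀ s t : ℝ, 0 ≤ s → s ≤ t →
      Real.exp (-(t - s)) * u x s ≤ u x t) ∧
    (∀ x : Spc N, ∀ s t : ℝ, 0 ≤ s → s ≤ t →
      Real.exp (-(t - s)) * max (u x s - 1) 0 ≤ max (u x t - 1) 0) ∧
    (∀ s t : ℝ, 0 ≤ s → s ≤ t →
      {x : Spc N | 0 < u x s} ⊆ {x : Spc N | 0 < u x t}) ∧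
    (∀ s t : ℝ, 0 ≤ s → s ≤ t →
      {x : Spc N | 0 < max (u x s - 1) 0} ⊆ {x : Spc N | 0 < max (u x t - 1) 0}) := by
  have hinit : ∀ x, 0 ≤ u x 0 := fun x => by simpa [hu.eqn x 0 le_rfl] using hf0 x
  have hu_retain : ∀ x s t, 0 ≤ s → s ≤ t → Real.exp (-(t - s)) * u x s ≤ u x t := by
    intro x s t hs hst
    have hus : 0 ≤ u x s := by
      have := hu.exp_neg_mul_sub_le hJ zero_le_one x le_rfl hs (hinit x)
      simp only [sub_zero] at this
      exact (mul_nonneg (Real.exp_pos _).le (hinit x)).trans this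
    simpa using hu.exp_neg_mul_sub_le hJ zero_le_one x hs hst hus
  have hv_retain : ∀ x s t, 0 ≤ s → s ≤ t →
      Real.exp (-(t - s)) * max (u x s - 1) 0 ≤ max (u x t - 1) 0 := by
    intro x s t hs hst
    rcases le_total (u x s) 1 with hle | hgt
    · simp [max_eq_right (sub_nonpos.2 hle)]
    · rw [max_eq_left (sub_nonneg.2 hgt)]
      exact (hu.exp_neg_mul_sub_le hJ le_rfl x hs hst hgt).trans (le_max_left _ _)
  exact ⟨hu_retain, hv_retain,
    fun s t hs hst x hx => (mul_pos (Real.exp_pos _) hx).trans_le (hu_retain x s t hs hst),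
    fun s t hs hst x hx => (mul_pos (Real.exp_pos _) hx).trans_le (hv_retain x s t hs hst)⟩

/-- Retention property for BC-solutions: for `0 ≤ s ≤ t`,
`u(x,t) ≥ e^{−(t−s)} u(x,s)` and `v(x,t) ≥ e^{−(t−s)} v(x,s)` where `v = (u−1)₊`;
in particular the positivity sets of `u` and of `v` are nondecreasing in time. -/
theorem stefan_nonlocal_BC_retention
    (N : ℕ) (hN : 1 ≤ N) (J : Spc N → ℝ) (RJ : ℝ) (hJ : IsKernel J RJ)
    (f : Spc N → ℝ) (hfc : Continuous f) (hfb : ∃ C, ∀ x, |f x| ≤ C)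
    (hf0 : ∀ x, 0 ≤ f x)
    (u : Spc N → ℝ → ℝ) (hu : IsBCSolution J f u) :
    (∀ x : Spc N, ∀ s t : ℝ, 0 ≤ s → s ≤ t →
      Real.exp (-(t - s)) * u x s ≤ u x t) ∧
    (∀ x : Spc N, ∀ s t : ℝ, 0 ≤ s → s ≤ t →
      Real.exp (-(t - s)) * max (u x s - 1) 0 ≤ max (u x t - 1) 0) ∧
    (∀ s t : ℝ, 0 ≤ s → s ≤ t →
      {x : Spc N | 0 < u x s} ⊆ {x : Spc N | 0 < u x t}) ∧
    (∀ s t : ℝ, 0 ≤ s → s ≤ t →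
      {x : Spc N | 0 < max (u x s - 1) 0} ⊆ {x : Spc N | 0 < max (u x t - 1) 0}) :=
  stefan_nonlocal_BC_retention_general N J RJ hJ f hf0 u hu
end
end

section
/- Let w ∈ L¹(ℝ^N) satisfy w ≥ 0 a.e. and w ≤ J∗w a.e. Then w = 0 a.e. -/
open MeasureTheory Filter
open scoped Topology Pointwise

noncomputable section

variable {N : ℕ}

/-!
Put `g = J ⋆ w`. Both `w` and `g` have integral `∫ w`, and `w ≤ g` a.e., so `w = g` a.e.; hence
`g = J ⋆ g`, and `g` is continuous, nonnegative and tends to `0` at infinity. If `g` were positive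
somewhere it would attain a positive maximum `M` at some `x₀`. As `g x₀ = ∫ J t * g (x₀ - t)` is an
average of values `≤ M`, `g = M` on `x₀ - support J`; iterating along some `u ≠ 0` with `J u ≠ 0`
gives `g (x₀ - k • u) = M` for all `k`, contradicting `g → 0` at infinity.
-/

open ContinuousLinearMap
open scoped Convolution

section Convolution

variable {G : Type*} [MeasurableSpace G] {μ : Measure G} {J f g : G → ℝ}

theorem exists_ne_zero_apply_ne_zero_of_integral_ne_zero [Zero G] [NullSingletonClass μ]
    (h : ∫ x, J x ∂μ ≠ 0) : ∃ u ≠ 0, J u ≠ 0 := by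
  by_contra! hJ
  refine h (integral_eq_zero_of_ae (measure_mono_null (fun u hu => ?_) (measure_singleton 0)))
  by_contra hu0
  exact hu (hJ u hu0)

section AddGroup

variable [AddGroup G] [MeasurableAdd₂ G] [MeasurableNeg G] [SFinite μ] [μ.IsAddRightInvariant]

theorem convolution_nonneg_of_ae_nonneg (hJ : 0 ≤ J) (hf : 0 ≤ᵐ[μ] f) (x : G) :
    0 ≤ (J ⋆[lsmul ℝ ℝ, μ] f) x :=
  integral_nonneg_of_ae <|
    ((quasiMeasurePreserving_sub_left_of_right_invariant μ x).ae hf).mono fun t ht =>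
      mul_nonneg (hJ t) ht

theorem ae_eq_convolution_of_ae_le_convolution (hJ : Integrable J μ) (hJ1 : ∫ x, J x ∂μ = 1)
    (hf : Integrable f μ) (hle : f ≤ᵐ[μ] J ⋆[lsmul ℝ ℝ, μ] f) : f =ᵐ[μ] J ⋆[lsmul ℝ ℝ, μ] f := by
  refine (integral_eq_iff_of_ae_le hf (hJ.integrable_convolution _ hf) hle).mp ?_
  rw [integral_convolution _ hJ hf, hJ1, lsmul_apply, one_smul]

end AddGroup

theorem apply_sub_eq_of_forall_le_of_convolution_eq [AddGroup G] [TopologicalSpace G]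
    [IsTopologicalAddGroup G] [μ.IsOpenPosMeasure] {x₀ t : G} (hJ : 0 ≤ J) (hJc : Continuous J)
    (hJi : Integrable J μ) (hJ1 : ∫ x, J x ∂μ = 1) (hg : Continuous g)
    (hex : ConvolutionExistsAt J g x₀ (lsmul ℝ ℝ) μ) (hfix : (J ⋆[lsmul ℝ ℝ, μ] g) x₀ = g x₀)
    (hmax : ∀ y, g y ≤ g x₀) (ht : J t ≠ 0) : g (x₀ - t) = g x₀ := by
  have hex' : Integrable (fun s => J s * g (x₀ - s)) μ := by
    simpa only [ConvolutionExistsAt, lsmul_apply, smul_eq_mul] using hex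
  set D : G → ℝ := fun s => J s * (g x₀ - g (x₀ - s))
  have hD_eq : D = fun s => J s * g x₀ - J s * g (x₀ - s) := by ext s; simp only [D, mul_sub]
  have hD_int : Integrable D μ := hD_eq ▸ (hJi.mul_const _).sub hex'
  have hD_zero : ∫ s, D s ∂μ = 0 := by
    rw [hD_eq, integral_sub (hJi.mul_const _) hex', integral_mul_const, hJ1, one_mul]
    simpa only [convolution_def, lsmul_apply, smul_eq_mul, sub_eq_zero] using hfix.symm
  have hD : D = 0 := (Continuous.ae_eq_iff_eq μ (by fun_prop) continuous_const).mp <|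
    (integral_eq_zero_iff_of_nonneg (fun s => mul_nonneg (hJ s) (sub_nonneg.2 (hmax _)))
      hD_int).mp hD_zero
  have := congrFun hD t
  simp only [D, Pi.zero_apply, mul_eq_zero, ht, false_or, sub_eq_zero] at this
  exact this.symm

theorem apply_sub_nsmul_eq_of_forall_le_of_convolution_eq [AddCommGroup G] [TopologicalSpace G]
    [IsTopologicalAddGroup G] [μ.IsOpenPosMeasure] {x₀ u : G} (hJ : 0 ≤ J) (hJc : Continuous J)
    (hJi : Integrable J μ) (hJ1 : ∫ x, J x ∂μ = 1) (hg : Continuous g)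
    (hex : ConvolutionExists J g (lsmul ℝ ℝ) μ) (hfix : J ⋆[lsmul ℝ ℝ, μ] g = g)
    (hmax : ∀ y, g y ≤ g x₀) (hu : J u ≠ 0) (k : ℕ) : g (x₀ - k • u) = g x₀ := by
  induction k with
  | zero => simp
  | succ k ih =>
    rw [succ_nsmul, ← sub_sub, ← ih]
    exact apply_sub_eq_of_forall_le_of_convolution_eq hJ hJc hJi hJ1 hg (hex _) (congrFun hfix _)
      (ih ▸ hmax) hu

section Normed

variable [NormedAddCommGroup G] [ProperSpace G] [BorelSpace G]

theorem HasCompactSupport.tendsto_convolution_cocompact [μ.IsAddLeftInvariant] [μ.IsNegInvariant]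
    (hJs : HasCompactSupport J) (hJc : Continuous J) (hf : Integrable f μ) :
    Tendsto (J ⋆[lsmul ℝ ℝ, μ] f) (cocompact G) (𝓝 0) := by
  obtain ⟨C, hC⟩ := hJc.bounded_above_of_compact_support hJs
  have : (cocompact G).IsCountablyGenerated := by
    rw [← Metric.cobounded_eq_cocompact, ← comap_norm_atTop]; infer_instance
  have h_swap : J ⋆[lsmul ℝ ℝ, μ] f = fun x => ∫ t, J (x - t) * f t ∂μ :=
    funext fun x => convolution_lsmul_swap
  rw [h_swap, ← integral_zero G ℝ]
  refine tendsto_integral_filter_of_dominated_convergence (fun t => C * ‖f t‖) ?_ ?_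
    (hf.norm.const_mul C) (Eventually.of_forall fun t => ?_)
  · exact Eventually.of_forall fun x =>
      ((hJc.comp (continuous_const.sub continuous_id)).aestronglyMeasurable).mul hf.1
  · refine Eventually.of_forall fun x => Eventually.of_forall fun t => ?_
    rw [norm_mul]
    exact mul_le_mul_of_nonneg_right (hC _) (norm_nonneg _)
  · simpa using (hJs.is_zero_at_infty.comp
      (Homeomorph.subRight t).isClosedEmbedding.tendsto_cocompact).mul_const (f t)

theorem nonpos_of_convolution_eq [NormedSpace ℝ G] [μ.IsAddHaarMeasure] [μ.IsNegInvariant]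
    (hJ : 0 ≤ J) (hJc : Continuous J) (hJs : HasCompactSupport J) (hJ1 : ∫ x, J x ∂μ = 1)
    {u : G} (hu0 : u ≠ 0) (hu : J u ≠ 0) (hg : Continuous g)
    (hg_lim : Tendsto g (cocompact G) (𝓝 0)) (hfix : J ⋆[lsmul ℝ ℝ, μ] g = g) (x : G) :
    g x ≤ 0 := by
  by_contra! hx
  obtain ⟨x₀, hmax⟩ := hg.exists_forall_ge' x
    ((hg_lim.eventually (gt_mem_nhds hx)).mono fun _ => le_of_lt)
  have h_orbit : Tendsto (fun k : ℕ => x₀ - k • u) atTop (cocompact G) := by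
    rw [← Metric.cobounded_eq_cocompact]
    refine (tendsto_const_sub_cobounded x₀).comp (tendsto_norm_atTop_iff_cobounded.mp ?_)
    simp only [← Nat.cast_smul_eq_nsmul ℝ, norm_smul, Real.norm_natCast]
    exact tendsto_natCast_atTop_atTop.atTop_mul_const (norm_pos_iff.mpr hu0)
  have h_const := apply_sub_nsmul_eq_of_forall_le_of_convolution_eq hJ hJc
    (hJc.integrable_of_hasCompactSupport hJs) hJ1 hg
    (hJs.convolutionExists_left _ hJc hg.locallyIntegrable) hfix hmax hu
  have h_max_zero : g x₀ = 0 :=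
    tendsto_nhds_unique (tendsto_const_nhds.congr fun k => (h_const k).symm) (hg_lim.comp h_orbit)
  linarith [hmax x]

end Normed

end Convolution

theorem convol_eq_convolution (J v : Spc N → ℝ) : convol J v = J ⋆ v :=
  funext fun _ => by rw [convolution_lsmul_swap]; rfl

namespace IsKernel

variable {J : Spc N → ℝ} {RJ : ℝ}

theorem hasCompactSupport (hJ : IsKernel J RJ) : HasCompactSupport J :=
  HasCompactSupport.intro (isCompact_closedBall 0 RJ) fun x hx =>
    hJ.supp_subset x (by simpa using hx)

theorem integrable_s17 (hJ : IsKernel J RJ) : Integrable J :=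
  hJ.cont.integrable_of_hasCompactSupport hJ.hasCompactSupport

end IsKernel

/-- Liouville-type lemma for `J`-subharmonic functions: if
`w ∈ L¹(ℝ^N)`, `w ≥ 0` a.e. and `w ≤ J∗w` a.e., then `w = 0` a.e. -/
theorem nonlocal_liouville
    (N : ℕ) (hN : 1 ≤ N) (J : Spc N → ℝ) (RJ : ℝ) (hJ : IsKernel J RJ)
    (w : Spc N → ℝ) (hw : Integrable w)
    (hw0 : ∀ᵐ x ∂(volume : Measure (Spc N)), 0 ≤ w x)
    (hsub : ∀ᵐ x ∂(volume : Measure (Spc N)), w x ≤ convol J w x) :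
    w =ᵐ[(volume : Measure (Spc N))] (0 : Spc N → ℝ) := by
  -- makes `volume` atomless; for `N = 0` it is a Dirac mass
  have : Nonempty (Fin N) := ⟨⟨0, hN⟩⟩
  obtain ⟨u, hu0, hu⟩ := exists_ne_zero_apply_ne_zero_of_integral_ne_zero
    (hJ.mass.trans_ne one_ne_zero)
  have hwg : w =ᵐ[volume] J ⋆ w := ae_eq_convolution_of_ae_le_convolution hJ.integrable_s17 hJ.mass hw
    (by rwa [← convol_eq_convolution])
  have hfix : J ⋆ (J ⋆ w) = J ⋆ w := (convolution_congr _ EventuallyEq.rfl hwg).symm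
  have hg_le : ∀ x, (J ⋆ w) x ≤ 0 := nonpos_of_convolution_eq hJ.nonneg hJ.cont
    hJ.hasCompactSupport hJ.mass hu0 hu
    (hJ.hasCompactSupport.continuous_convolution_left _ hJ.cont hw.locallyIntegrable)
    (hJ.hasCompactSupport.tendsto_convolution_cocompact hJ.cont hw) hfix
  exact hwg.trans (Eventually.of_forall fun x =>
    le_antisymm (hg_le x) (convolution_nonneg_of_ae_nonneg hJ.nonneg hw0 x))
end
end
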